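/- Let N ≥ 2 be an integer and let c = (c_i)_{0≤i≤N} be a differentiable solution of the N-truncated non-isolated DGED system on an interval I ⊆ ℝ. Then for every sequence (g_i)_{i≥0} of real numbers and every t ∈ I, d/dt ∑_{i=0}^N g_i c_i(t) = ∑_{k=1}^{N−1} ∑_{i=k}^{N} ∑_{j=0}^{N−k} (g_{j+k} + g_{i−k} − g_j − g_i) a(i,j;k) c_i(t) c_j(t) − g_0 ( ∑_{k=1}^{N} ∑_{j=0}^{N−k} a(k,j;k) c_k(t) c_j(t) − ∑_{k=1}^{N} ∑_{i=k}^{N} a(i,0;k) c_i(t) c_0(t) ). -/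

import Mathlib

open Finset

/-- Truncated operator `Q^N_{1,i}`. -/
noncomputable def QN1 (a : ℕ → ℕ → ℕ → ℝ) (N : ℕ) (c : ℕ → ℝ) (i : ℕ) : ℝ :=
  ∑ k ∈ Finset.Icc 1 (N - i), ∑ j ∈ Finset.Icc 0 (N - k), a (i + k) j k * c (i + k) * c j

/-- Truncated operator `Q^N_{2,i}`. -/
noncomputable def QN2 (a : ℕ → ℕ → ℕ → ℝ) (N : ℕ) (c : ℕ → ℝ) (i : ℕ) : ℝ :=
  -∑ k ∈ Finset.Icc 1 (N - i), ∑ j ∈ Finset.Icc k N, a j i k * c j * c i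

/-- Truncated operator `Q^N_{3,i}`. -/
noncomputable def QN3 (a : ℕ → ℕ → ℕ → ℝ) (N : ℕ) (c : ℕ → ℝ) (i : ℕ) : ℝ :=
  ∑ k ∈ Finset.Icc 1 i, ∑ j ∈ Finset.Icc k N, a j (i - k) k * c j * c (i - k)

/-- Truncated operator `Q^N_{4,i}`. -/
noncomputable def QN4 (a : ℕ → ℕ → ℕ → ℝ) (N : ℕ) (c : ℕ → ℝ) (i : ℕ) : ℝ :=
  -∑ k ∈ Finset.Icc 1 i, ∑ j ∈ Finset.Icc 0 (N - k), a i j k * c j * c i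


/-- `c` is a solution of the `N`-truncated non-isolated DGED system on the set `I`. -/
def IsTruncSolNon (a : ℕ → ℕ → ℕ → ℝ) (N : ℕ) (I : Set ℝ) (c : ℕ → ℝ → ℝ) : Prop :=
  ∀ t ∈ I,
    HasDerivAt (c 0) 0 t ∧
    (∀ i, 1 ≤ i → i ≤ N - 1 →
      HasDerivAt (c i)
        (QN1 a N (fun n => c n t) i + QN2 a N (fun n => c n t) i +
          QN3 a N (fun n => c n t) i + QN4 a N (fun n => c n t) i) t) ∧
    HasDerivAt (c N) (QN3 a N (fun n => c n t) N + QN4 a N (fun n => c n t) N) t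

/-!
Each of the four sums `∑ᵢ gᵢ Q^N_{m,i}(c)` is, after exchanging the order of summation and
shifting the summation index, a sum of `a(i,j;k) cᵢ cⱼ` over the same index set
`1 ≤ k ≤ i ≤ N`, `j ≤ N - k`, weighted by `g_{i-k}`, `-g_j`, `g_{j+k}` and `-g_i` respectively.
The moment of a solution therefore evolves by the sum of these four weights, except that the
constant coordinate `c₀` contributes nothing instead of `g₀ Q^N_0(c)`. The term `k = N` of the
combined sum drops out because its only summand, `(i, j) = (N, 0)`, has weight zero.
-/

noncomputable def QN (a : ℕ → ℕ → ℕ → ℝ) (N : ℕ) (c : ℕ → ℝ) (i : ℕ) : ℝ :=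
  QN1 a N c i + QN2 a N c i + QN3 a N c i + QN4 a N c i

lemma sum_Icc_eq_sum_Icc_zero_add {k N : ℕ} (hk : k ≤ N) (F : ℕ → ℝ) :
    ∑ i ∈ Icc k N, F i = ∑ m ∈ Icc 0 (N - k), F (k + m) := by
  have h : (Icc 0 (N - k)).map (addLeftEmbedding k) = Icc k N := by
    rw [map_add_left_Icc]; congr 1; omega
  rw [← h, sum_map]
  rfl

section WeakForm

variable (a : ℕ → ℕ → ℕ → ℝ) (g : ℕ → ℝ) (N : ℕ) (c : ℕ → ℝ)

lemma sum_mul_QN1 : ∑ i ∈ range (N + 1), g i * QN1 a N c i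
    = ∑ k ∈ Icc 1 N, ∑ i ∈ Icc k N, ∑ j ∈ Icc 0 (N - k), g (i - k) * (a i j k * c i * c j) := by
  simp only [QN1, mul_sum]
  rw [sum_comm' (s' := fun k => Icc 0 (N - k)) (t' := Icc 1 N)
    (h := by intro i k; simp only [mem_range, mem_Icc]; omega)]
  refine sum_congr rfl fun k hk => ?_
  rw [sum_Icc_eq_sum_Icc_zero_add (mem_Icc.1 hk).2]
  simp only [Nat.add_comm k, Nat.add_sub_cancel]

lemma sum_mul_QN2 : ∑ i ∈ range (N + 1), g i * QN2 a N c i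
    = -∑ k ∈ Icc 1 N, ∑ i ∈ Icc k N, ∑ j ∈ Icc 0 (N - k), g j * (a i j k * c i * c j) := by
  simp only [QN2, mul_neg, mul_sum, sum_neg_distrib, neg_inj]
  rw [sum_comm' (s' := fun k => Icc 0 (N - k)) (t' := Icc 1 N)
    (h := by intro i k; simp only [mem_range, mem_Icc]; omega)]
  exact sum_congr rfl fun k _ => sum_comm

lemma sum_mul_QN3 : ∑ i ∈ range (N + 1), g i * QN3 a N c i
    = ∑ k ∈ Icc 1 N, ∑ i ∈ Icc k N, ∑ j ∈ Icc 0 (N - k), g (j + k) * (a i j k * c i * c j) := by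
  simp only [QN3, mul_sum]
  rw [sum_comm' (s' := fun k => Icc k N) (t' := Icc 1 N)
    (h := by intro i k; simp only [mem_range, mem_Icc]; omega)]
  refine sum_congr rfl fun k hk => ?_
  rw [sum_Icc_eq_sum_Icc_zero_add (mem_Icc.1 hk).2, sum_comm]
  simp only [Nat.add_comm k, Nat.add_sub_cancel]

lemma sum_mul_QN4 : ∑ i ∈ range (N + 1), g i * QN4 a N c i
    = -∑ k ∈ Icc 1 N, ∑ i ∈ Icc k N, ∑ j ∈ Icc 0 (N - k), g i * (a i j k * c i * c j) := by
  simp only [QN4, mul_neg, mul_sum, sum_neg_distrib, neg_inj, mul_right_comm _ (c _) (c _)]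
  exact sum_comm' (h := by intro i k; simp only [mem_range, mem_Icc]; omega)

theorem sum_mul_QN : ∑ i ∈ range (N + 1), g i * QN a N c i
    = ∑ k ∈ Icc 1 N, ∑ i ∈ Icc k N, ∑ j ∈ Icc 0 (N - k),
        (g (j + k) + g (i - k) - g j - g i) * a i j k * c i * c j := by
  simp only [QN, mul_add, sum_add_distrib]
  rw [sum_mul_QN1, sum_mul_QN2, sum_mul_QN3, sum_mul_QN4]
  simp only [← sum_neg_distrib, ← sum_add_distrib]
  refine sum_congr rfl fun k _ => sum_congr rfl fun i _ => sum_congr rfl fun j _ => ?_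
  ring

end WeakForm

lemma QN_zero (a : ℕ → ℕ → ℕ → ℝ) (N : ℕ) (c : ℕ → ℝ) : QN a N c 0
    = ∑ k ∈ Icc 1 N, ∑ j ∈ Icc 0 (N - k), a k j k * c k * c j
      - ∑ k ∈ Icc 1 N, ∑ i ∈ Icc k N, a i 0 k * c i * c 0 := by
  simp [QN, QN1, QN2, QN3, QN4, sub_eq_add_neg]

lemma sum_Icc_pred_exchange_eq (a : ℕ → ℕ → ℕ → ℝ) (g : ℕ → ℝ) (N : ℕ) (c : ℕ → ℝ) :
    ∑ k ∈ Icc 1 (N - 1), ∑ i ∈ Icc k N, ∑ j ∈ Icc 0 (N - k),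
        (g (j + k) + g (i - k) - g j - g i) * a i j k * c i * c j
      = ∑ k ∈ Icc 1 N, ∑ i ∈ Icc k N, ∑ j ∈ Icc 0 (N - k),
        (g (j + k) + g (i - k) - g j - g i) * a i j k * c i * c j := by
  rcases N with _ | M
  · rfl
  · rw [Nat.add_sub_cancel, sum_Icc_succ_top (by omega)]
    simp

namespace IsTruncSolNon

variable {a : ℕ → ℕ → ℕ → ℝ} {N : ℕ} {I : Set ℝ} {c : ℕ → ℝ → ℝ} {t : ℝ}

lemma hasDerivAt_of_one_le_of_le (hc : IsTruncSolNon a N I c) (ht : t ∈ I) {i : ℕ}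
    (hi : 1 ≤ i) (hiN : i ≤ N) : HasDerivAt (c i) (QN a N (fun n => c n t) i) t := by
  obtain ⟨-, hmid, htop⟩ := hc t ht
  rcases hiN.lt_or_eq with hiN | rfl
  · exact hmid i hi (by omega)
  · simpa [QN, QN1, QN2] using htop

lemma hasDerivAt_moment (hc : IsTruncSolNon a N I c) (ht : t ∈ I) (g : ℕ → ℝ) :
    HasDerivAt (fun s => ∑ i ∈ range (N + 1), g i * c i s)
      (∑ i ∈ range (N + 1), g i * QN a N (fun n => c n t) i
        - g 0 * QN a N (fun n => c n t) 0) t := by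
  simp only [sum_range_succ' _ N, add_sub_cancel_right]
  have hsum := HasDerivAt.fun_sum (u := range N) fun i hi =>
    (hc.hasDerivAt_of_one_le_of_le ht (Nat.le_add_left 1 i) (mem_range.1 hi)).const_mul (g (i + 1))
  simpa using hsum.fun_add ((hc t ht).1.const_mul (g 0))

end IsTruncSolNon

theorem truncated_nonisolated_moment_identity_general
    (a : ℕ → ℕ → ℕ → ℝ)
    (N : ℕ) (I : Set ℝ) (c : ℕ → ℝ → ℝ)
    (hc : IsTruncSolNon a N I c)
    (g : ℕ → ℝ) (t : ℝ) (ht : t ∈ I) :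
    HasDerivAt (fun s => ∑ i ∈ Finset.range (N + 1), g i * c i s)
      ((∑ k ∈ Finset.Icc 1 (N - 1), ∑ i ∈ Finset.Icc k N, ∑ j ∈ Finset.Icc 0 (N - k),
          (g (j + k) + g (i - k) - g j - g i) * a i j k * c i t * c j t)
        - g 0 *
          ((∑ k ∈ Finset.Icc 1 N, ∑ j ∈ Finset.Icc 0 (N - k), a k j k * c k t * c j t)
            - ∑ k ∈ Finset.Icc 1 N, ∑ i ∈ Finset.Icc k N, a i 0 k * c i t * c 0 t)) t := by
  have h := hc.hasDerivAt_moment ht g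
  rwa [sum_mul_QN, QN_zero, ← sum_Icc_pred_exchange_eq] at h

/-- Proposition 4.4: the evolution of generalized moments for the truncated
non-isolated system. -/
theorem truncated_nonisolated_moment_identity
    (a : ℕ → ℕ → ℕ → ℝ) (ha : ∀ i j k, 0 ≤ a i j k)
    (hzero : ∀ p : ℕ, 1 ≤ p → a p 0 p = 0)
    (N : ℕ) (hN : 2 ≤ N) (I : Set ℝ) (c : ℕ → ℝ → ℝ)
    (hc : IsTruncSolNon a N I c)
    (g : ℕ → ℝ) (t : ℝ) (ht : t ∈ I) :
    HasDerivAt (fun s => ∑ i ∈ Finset.range (N + 1), g i * c i s)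
      ((∑ k ∈ Finset.Icc 1 (N - 1), ∑ i ∈ Finset.Icc k N, ∑ j ∈ Finset.Icc 0 (N - k),
          (g (j + k) + g (i - k) - g j - g i) * a i j k * c i t * c j t)
        - g 0 *
          ((∑ k ∈ Finset.Icc 1 N, ∑ j ∈ Finset.Icc 0 (N - k), a k j k * c k t * c j t)
            - ∑ k ∈ Finset.Icc 1 N, ∑ i ∈ Finset.Icc k N, a i 0 k * c i t * c 0 t)) t :=
  truncated_nonisolated_moment_identity_general a N I c hc g t ht
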